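/- (Separator preserves the end-to-end arrival function.) Let A be a time-dependent network on a finite vertex set V, let s, d ∈ V, and suppose V is partitioned into three pairwise disjoint sets V₁, S, V₂ such that A u v and A v u are the constant function ⊤ whenever u ∈ V₁ and v ∈ V₂ (no edges cross the separator S). Let V' = S ∪ {s, d} and define a network A' on V' by A' u v (t) = min(A^{V₁∪S}_{(u,v)}(t), A^{V₂∪S}_{(u,v)}(t)), where a confined arrival function is taken to be the constant ⊤ if u or v lies outside the confining set. Then A' is a time-dependent network and its end-to-end arrival function satisfies A'_{(s,d)}(t) = A_{(s,d)}(t) for every t. -/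

import Mathlib

/-!
Shortcutting the cycles of a walk never delays arrival under FIFO, so every confined arrival
function is attained by a path, and there are finitely many paths. Hence an edge of the reduced
network stands for an actual walk of `A`, which makes `A'`-walks no faster than `A`-walks.
Conversely, cut an `A`-walk at its visits to `S ∪ {s, d}`: a piece of finite arrival uses no edge
between `V₁` and `V₂` and has its interior outside `S`, so it stays inside `V₁ ∪ S` or inside
`V₂ ∪ S`, and one edge of `A'` is at least as fast as it.
-/

open scoped ENNReal

/-- Arrival function of a walk: starting at `u` and then visiting the vertices of `l` in
order, departing at time `t`. -/
def walkArr {V : Type*} (A : V → V → ℝ≥0∞ → ℝ≥0∞) : V → List V → ℝ≥0∞ → ℝ≥0∞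
  | _, [], t => t
  | u, v :: l, t => walkArr A v l (A u v t)

/-- `l` (together with start vertex `s`) encodes a walk from `s` to `d`: the walk is the
nonempty vertex sequence `s :: l`, whose last vertex must be `d`. -/
def IsWalkTo {V : Type*} (s d : V) (l : List V) : Prop :=
  (s :: l).getLast (List.cons_ne_nil _ _) = d

noncomputable def endToEnd {V : Type*} (A : V → V → ℝ≥0∞ → ℝ≥0∞) (s d : V) (t : ℝ≥0∞) :
    ℝ≥0∞ :=
  ⨅ l : {l : List V // IsWalkTo s d l}, walkArr A s l.1 t

def FIFO {V : Type*} (A : V → V → ℝ≥0∞ → ℝ≥0∞) : Prop :=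
  ∀ u v : V, Monotone (A u v) ∧ ∀ t, t ≤ A u v t

/-- The confined arrival function `A^U_{(u,v)}`. If `u` or `v` lies outside `U` there are no
such walks and the infimum is `⊤`. -/
noncomputable def confArr {V : Type*} (A : V → V → ℝ≥0∞ → ℝ≥0∞) (U : Set V)
    (u v : V) (t : ℝ≥0∞) : ℝ≥0∞ :=
  ⨅ l : {l : List V // IsWalkTo u v l ∧ ∀ x ∈ u :: l, x ∈ U}, walkArr A u l.1 t

section Walks

variable {V : Type*} {u v w : V}

theorem isWalkTo_nil : IsWalkTo u v [] ↔ u = v := Iff.rfl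

theorem isWalkTo_cons {x : V} {l : List V} : IsWalkTo u v (x :: l) ↔ IsWalkTo x v l := by
  rw [IsWalkTo, IsWalkTo, List.getLast_cons]

theorem IsWalkTo.append {l₁ l₂ : List V} (h₁ : IsWalkTo u v l₁) (h₂ : IsWalkTo v w l₂) :
    IsWalkTo u w (l₁ ++ l₂) := by
  induction l₁ generalizing u with
  | nil => exact (isWalkTo_nil.mp h₁) ▸ h₂
  | cons x l₁ ih => exact isWalkTo_cons.mpr (ih (isWalkTo_cons.mp h₁))

theorem isWalkTo_append_cons {l₁ l₂ : List V} :
    IsWalkTo u w (l₁ ++ v :: l₂) ↔ IsWalkTo v w l₂ := by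
  induction l₁ generalizing u with
  | nil => exact isWalkTo_cons
  | cons x l₁ ih => exact isWalkTo_cons.trans ih

theorem isWalkTo_concat {l : List V} : IsWalkTo u v (l ++ [v]) :=
  isWalkTo_append_cons.mpr rfl

variable {A : V → V → ℝ≥0∞ → ℝ≥0∞}

theorem walkArr_mono (hA : FIFO A) (u : V) (l : List V) : Monotone (walkArr A u l) := by
  induction l generalizing u with
  | nil => exact monotone_id
  | cons v l ih => exact (ih v).comp (hA u v).1

theorem le_walkArr (hA : FIFO A) (u : V) (l : List V) (t : ℝ≥0∞) : t ≤ walkArr A u l t := by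
  induction l generalizing u t with
  | nil => exact le_rfl
  | cons v l ih => exact ((hA u v).2 t).trans (ih v _)

theorem walkArr_top (hA : FIFO A) (u : V) (l : List V) : walkArr A u l ⊤ = ⊤ :=
  top_le_iff.mp (le_walkArr hA u l ⊤)

theorem IsWalkTo.walkArr_append {l m : List V} (h : IsWalkTo u v l) (t : ℝ≥0∞) :
    walkArr A u (l ++ m) t = walkArr A v m (walkArr A u l t) := by
  induction l generalizing u t with
  | nil => rw [isWalkTo_nil.mp h]; rfl
  | cons x l ih => exact ih (isWalkTo_cons.mp h) _

theorem walkArr_append_cons (l₁ l₂ : List V) (t : ℝ≥0∞) :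
    walkArr A u (l₁ ++ v :: l₂) t = walkArr A v l₂ (walkArr A u (l₁ ++ [v]) t) := by
  rw [← isWalkTo_concat.walkArr_append, List.append_assoc, List.singleton_append]

theorem walkArr_le_append_cons_self (hA : FIFO A) (l₁ l₂ : List V) (t : ℝ≥0∞) :
    walkArr A u l₂ t ≤ walkArr A u (l₁ ++ u :: l₂) t := by
  rw [walkArr_append_cons]
  exact walkArr_mono hA _ _ (le_walkArr hA _ _ _)

theorem exists_nodup_walkArr_le (hA : FIFO A) {l : List V} (h : IsWalkTo u v l) :
    ∃ l', l'.Sublist l ∧ (u :: l').Nodup ∧ IsWalkTo u v l' ∧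
      ∀ t, walkArr A u l' t ≤ walkArr A u l t := by
  induction l generalizing u with
  | nil => exact ⟨[], List.Sublist.slnil, List.nodup_singleton u, h, fun _ => le_rfl⟩
  | cons x m ih =>
    obtain ⟨m', hsub, hnd, hwalk, hle⟩ := ih (isWalkTo_cons.mp h)
    have hle' : ∀ t, walkArr A u (x :: m') t ≤ walkArr A u (x :: m) t := fun t => hle _
    by_cases hu : u ∈ x :: m'
    · obtain ⟨p, q, hpq⟩ := List.append_of_mem hu
      have hq : (u :: q).Sublist (x :: m') := hpq ▸ List.sublist_append_right p (u :: q)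
      have hwalk' : IsWalkTo u v (p ++ u :: q) := hpq ▸ isWalkTo_cons.mpr hwalk
      refine ⟨q, (List.sublist_cons_self u q).trans (hq.trans (hsub.cons_cons x)),
        hnd.sublist hq, isWalkTo_append_cons.mp hwalk', fun t => ?_⟩
      calc walkArr A u q t ≤ walkArr A u (p ++ u :: q) t := walkArr_le_append_cons_self hA p q t
        _ = walkArr A u (x :: m') t := by rw [hpq]
        _ ≤ walkArr A u (x :: m) t := hle' t
    · exact ⟨x :: m', hsub.cons_cons x, List.nodup_cons.mpr ⟨hu, hnd⟩,
        isWalkTo_cons.mpr hwalk, hle'⟩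

theorem endToEnd_le {l : List V} (h : IsWalkTo u v l) (t : ℝ≥0∞) :
    endToEnd A u v t ≤ walkArr A u l t :=
  iInf_le_of_le ⟨l, h⟩ le_rfl

theorem confArr_le {U : Set V} {l : List V} (h : IsWalkTo u v l) (hU : ∀ x ∈ u :: l, x ∈ U)
    (t : ℝ≥0∞) : confArr A U u v t ≤ walkArr A u l t :=
  iInf_le_of_le ⟨l, h, hU⟩ le_rfl

theorem endToEnd_top (hA : FIFO A) : endToEnd A u v ⊤ = ⊤ :=
  le_antisymm le_top (le_iInf fun l => (walkArr_top hA u l.1).ge)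

theorem endToEnd_le_endToEnd_walkArr {l : List V} (h : IsWalkTo u v l) (t : ℝ≥0∞) :
    endToEnd A u w t ≤ endToEnd A v w (walkArr A u l t) :=
  le_iInf fun m => (endToEnd_le (h.append m.2) t).trans_eq (h.walkArr_append t)

end Walks

section Attainment

variable {V : Type*} [Fintype V] {A : V → V → ℝ≥0∞ → ℝ≥0∞} {u v w : V}

theorem exists_walkArr_eq_confArr (hA : FIFO A) {U : Set V}
    (hne : Nonempty {l : List V // IsWalkTo u v l ∧ ∀ x ∈ u :: l, x ∈ U}) (t : ℝ≥0∞) :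
    ∃ l, IsWalkTo u v l ∧ (∀ x ∈ u :: l, x ∈ U) ∧ walkArr A u l t = confArr A U u v t := by
  set P : Set (List V) := {l | (IsWalkTo u v l ∧ ∀ x ∈ u :: l, x ∈ U) ∧ (u :: l).Nodup}
  have shortcut : ∀ l, IsWalkTo u v l → (∀ x ∈ u :: l, x ∈ U) →
      ∃ l' ∈ P, walkArr A u l' t ≤ walkArr A u l t := by
    intro l hl hU
    obtain ⟨l', hsub, hnd, hl', hle⟩ := exists_nodup_walkArr_le hA hl
    exact ⟨l', ⟨⟨hl', fun x hx => hU x ((hsub.cons_cons u).subset hx)⟩, hnd⟩, hle t⟩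
  have hfin : P.Finite := (List.finite_length_le V (Fintype.card V)).subset
    fun l hl => (List.nodup_cons.mp hl.2).2.length_le_card
  obtain ⟨⟨l, hl, hU⟩⟩ := hne
  obtain ⟨l₀, hl₀, -⟩ := shortcut l hl hU
  obtain ⟨m, ⟨⟨hm, hmU⟩, -⟩, hmin⟩ := Set.exists_min_image P (walkArr A u · t) hfin ⟨l₀, hl₀⟩
  refine ⟨m, hm, hmU, le_antisymm (le_iInf fun l => ?_) (confArr_le hm hmU t)⟩
  obtain ⟨l', hl', hle⟩ := shortcut l.1 l.2.1 l.2.2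
  exact (hmin l' hl').trans hle

theorem endToEnd_le_endToEnd_confArr (hA : FIFO A) (U : Set V) (t : ℝ≥0∞) :
    endToEnd A u w t ≤ endToEnd A v w (confArr A U u v t) := by
  by_cases hne : Nonempty {l : List V // IsWalkTo u v l ∧ ∀ x ∈ u :: l, x ∈ U}
  · obtain ⟨l, hl, -, heq⟩ := exists_walkArr_eq_confArr hA hne t
    exact heq ▸ endToEnd_le_endToEnd_walkArr hl t
  · rw [not_nonempty_iff] at hne
    rw [confArr, iInf_of_empty, endToEnd_top hA]
    exact le_top

end Attainment

noncomputable def separatorNet {V : Type*} (A : V → V → ℝ≥0∞ → ℝ≥0∞) (V₁ S V₂ T : Set V)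
    (u v : T) (t : ℝ≥0∞) : ℝ≥0∞ :=
  min (confArr A (V₁ ∪ S) u v t) (confArr A (V₂ ∪ S) u v t)

section Separator

variable {V : Type*} {A : V → V → ℝ≥0∞ → ℝ≥0∞} {V₁ S V₂ T : Set V}

theorem fifo_separatorNet (hA : FIFO A) : FIFO (separatorNet A V₁ S V₂ T) := by
  have hmono (U : Set V) (u v : V) : Monotone (confArr A U u v) :=
    fun _ _ hab => le_iInf fun l => (iInf_le _ l).trans (walkArr_mono hA u l.1 hab)
  have hle (U : Set V) (u v : V) (t : ℝ≥0∞) : t ≤ confArr A U u v t :=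
    le_iInf fun l => le_walkArr hA u l.1 t
  exact fun u v => ⟨(hmono _ u v).min (hmono _ u v), fun t => le_min (hle _ u v t) (hle _ u v t)⟩

theorem endToEnd_le_walkArr_separatorNet [Fintype V] (hA : FIFO A) {u w : T} {l : List T}
    (h : IsWalkTo u w l) (t : ℝ≥0∞) :
    endToEnd A u w t ≤ walkArr (separatorNet A V₁ S V₂ T) u l t := by
  induction l generalizing u t with
  | nil =>
    obtain rfl := isWalkTo_nil.mp h
    exact endToEnd_le (isWalkTo_nil.mpr rfl) t
  | cons v l ih =>
    calc endToEnd A u w t ≤ endToEnd A v w (separatorNet A V₁ S V₂ T u v t) := by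
          rcases min_choice (confArr A (V₁ ∪ S) u v t) (confArr A (V₂ ∪ S) u v t)
            with hmin | hmin <;>
          rw [separatorNet, hmin] <;> exact endToEnd_le_endToEnd_confArr hA _ t
      _ ≤ walkArr (separatorNet A V₁ S V₂ T) v l (separatorNet A V₁ S V₂ T u v t) :=
          ih (isWalkTo_cons.mp h) _

theorem not_crossing_of_ne_top
    (hsep : ∀ u ∈ V₁, ∀ v ∈ V₂, (∀ t, A u v t = ⊤) ∧ (∀ t, A v u t = ⊤))
    {a b : V} {t : ℝ≥0∞} (h : A a b t ≠ ⊤) : ¬(a ∈ V₁ ∧ b ∈ V₂) ∧ ¬(a ∈ V₂ ∧ b ∈ V₁) :=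
  ⟨fun hab => h ((hsep a hab.1 b hab.2).1 t), fun hab => h ((hsep b hab.2 a hab.1).2 t)⟩

theorem walk_mem_side_of_walkArr_ne_top (hA : FIFO A) (hcover : V₁ ∪ S ∪ V₂ = Set.univ)
    (hsep : ∀ u ∈ V₁, ∀ v ∈ V₂, (∀ t, A u v t = ⊤) ∧ (∀ t, A v u t = ⊤))
    {a b : V} {m : List V} (hm : ∀ x ∈ m, x ∉ S) {t : ℝ≥0∞}
    (h : walkArr A a (m ++ [b]) t ≠ ⊤) :
    (∀ x ∈ a :: (m ++ [b]), x ∈ V₁ ∪ S) ∨ (∀ x ∈ a :: (m ++ [b]), x ∈ V₂ ∪ S) := by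
  have hside₁ (x : V) (hx : x ∉ V₂) : x ∈ V₁ ∪ S := by
    have : x ∈ V₁ ∪ S ∪ V₂ := hcover ▸ Set.mem_univ x
    exact this.resolve_right hx
  have hside₂ (x : V) (hx : x ∉ V₁) : x ∈ V₂ ∪ S := by
    have : x ∈ V₁ ∪ S ∪ V₂ := hcover ▸ Set.mem_univ x
    rcases this with (h | h) | h
    exacts [absurd h hx, Set.mem_union_right _ h, Set.mem_union_left _ h]
  induction m generalizing a t with
  | nil =>
    have hcross := not_crossing_of_ne_top hsep h
    simp only [List.nil_append, List.forall_mem_cons, List.not_mem_nil, IsEmpty.forall_iff,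
      implies_true, and_true]
    by_cases ha : a ∈ V₂
    · exact Or.inr ⟨Set.mem_union_left _ ha, hside₂ b fun hb => hcross.2 ⟨ha, hb⟩⟩
    by_cases hb : b ∈ V₂
    · exact Or.inr ⟨hside₂ a fun ha => hcross.1 ⟨ha, hb⟩, Set.mem_union_left _ hb⟩
    exact Or.inl ⟨hside₁ a ha, hside₁ b hb⟩
  | cons x m ih =>
    have hx : A a x t ≠ ⊤ := fun htop => h (htop ▸ walkArr_top hA x _)
    have hcross := not_crossing_of_ne_top hsep hx
    obtain ⟨hxS, hmS⟩ := List.forall_mem_cons.mp hm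
    rcases ih hmS h with hL | hL
    · have hx₁ : x ∈ V₁ := ((hL x List.mem_cons_self).resolve_right hxS)
      exact Or.inl (List.forall_mem_cons.mpr ⟨hside₁ a fun ha => hcross.2 ⟨ha, hx₁⟩, hL⟩)
    · have hx₂ : x ∈ V₂ := ((hL x List.mem_cons_self).resolve_right hxS)
      exact Or.inr (List.forall_mem_cons.mpr ⟨hside₂ a fun ha => hcross.1 ⟨ha, hx₂⟩, hL⟩)

theorem separatorNet_le_walkArr (hA : FIFO A) (hcover : V₁ ∪ S ∪ V₂ = Set.univ)
    (hsep : ∀ u ∈ V₁, ∀ v ∈ V₂, (∀ t, A u v t = ⊤) ∧ (∀ t, A v u t = ⊤))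
    {u v : T} {q : List V} (hq : ∀ x ∈ q, x ∉ S) (t : ℝ≥0∞) :
    separatorNet A V₁ S V₂ T u v t ≤ walkArr A u (q ++ [(v : V)]) t := by
  by_cases htop : walkArr A u (q ++ [(v : V)]) t = ⊤
  · exact htop ▸ le_top
  rcases walk_mem_side_of_walkArr_ne_top hA hcover hsep hq htop with hU | hU
  · exact (min_le_left _ _).trans (confArr_le isWalkTo_concat hU t)
  · exact (min_le_right _ _).trans (confArr_le isWalkTo_concat hU t)

/-- `q` is the part of the current piece already traversed after leaving `u`; the piece ends
at the next vertex of `T`. -/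
theorem exists_walkArr_separatorNet_le (hA : FIFO A) (hcover : V₁ ∪ S ∪ V₂ = Set.univ)
    (hsep : ∀ u ∈ V₁, ∀ v ∈ V₂, (∀ t, A u v t = ⊤) ∧ (∀ t, A v u t = ⊤))
    (hST : S ⊆ T) {w : T} (l : List V) (u : T) (q : List V) (hq : ∀ x ∈ q, x ∉ T)
    (h : IsWalkTo (u : V) w (q ++ l)) (t : ℝ≥0∞) :
    ∃ l' : List T, IsWalkTo u w l' ∧
      walkArr (separatorNet A V₁ S V₂ T) u l' t ≤ walkArr A u (q ++ l) t := by
  induction l generalizing u q t with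
  | nil =>
    rw [List.append_nil] at h ⊢
    rcases q.eq_nil_or_concat' with rfl | ⟨q, x, rfl⟩
    · exact ⟨[], Subtype.ext h, le_rfl⟩
    · obtain rfl : x = w := isWalkTo_append_cons.mp h
      exact absurd w.2 (hq w (List.mem_append_right _ List.mem_cons_self))
  | cons v l ih =>
    by_cases hv : v ∈ T
    · obtain ⟨l', hl', hle⟩ := ih ⟨v, hv⟩ [] (List.forall_mem_nil _)
        (isWalkTo_append_cons.mp h) (separatorNet A V₁ S V₂ T u ⟨v, hv⟩ t)
      refine ⟨⟨v, hv⟩ :: l', isWalkTo_cons.mpr hl', ?_⟩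
      calc walkArr (separatorNet A V₁ S V₂ T) u (⟨v, hv⟩ :: l') t
          ≤ walkArr A v l (separatorNet A V₁ S V₂ T u ⟨v, hv⟩ t) := hle
        _ ≤ walkArr A v l (walkArr A u (q ++ [v]) t) := walkArr_mono hA _ _
            (separatorNet_le_walkArr hA hcover hsep (fun x hx hxS => hq x hx (hST hxS)) t)
        _ = walkArr A u (q ++ v :: l) t := (walkArr_append_cons q l t).symm
    · have hq' : ∀ x ∈ q ++ [v], x ∉ T := by
        simpa only [List.mem_append, List.mem_singleton, or_imp, forall_and, forall_eq]
          using ⟨hq, hv⟩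
      simpa only [List.append_assoc, List.singleton_append] using
        ih u (q ++ [v]) hq' (by simpa only [List.append_assoc, List.singleton_append] using h) t

theorem endToEnd_separatorNet [Fintype V] (hA : FIFO A) (hcover : V₁ ∪ S ∪ V₂ = Set.univ)
    (hsep : ∀ u ∈ V₁, ∀ v ∈ V₂, (∀ t, A u v t = ⊤) ∧ (∀ t, A v u t = ⊤))
    (hST : S ⊆ T) (u w : T) (t : ℝ≥0∞) :
    endToEnd (separatorNet A V₁ S V₂ T) u w t = endToEnd A u w t := by
  refine le_antisymm (le_iInf fun l => ?_) (le_iInf fun l => ?_)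
  · obtain ⟨l', hl', hle⟩ :=
      exists_walkArr_separatorNet_le hA hcover hsep hST l.1 u [] (List.forall_mem_nil _) l.2 t
    exact (endToEnd_le hl' t).trans hle
  · exact endToEnd_le_walkArr_separatorNet hA l.2 t

end Separator

/-- A separator preserves the end-to-end arrival function: if `V` is partitioned into
`V₁, S, V₂` with no edges between `V₁` and `V₂`, then the network `A'` on `S ∪ {s, d}`
whose edge arrival functions are the minima of the arrival functions confined to the two
sides of the separator is a time-dependent network with the same `s`-to-`d` arrival
function as `A`. -/
theorem separator_preserves_endToEnd {V : Type*} [Fintype V]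
    (A : V → V → ℝ≥0∞ → ℝ≥0∞) (hA : FIFO A) (s d : V)
    (V₁ S V₂ : Set V)
    (hcover : V₁ ∪ S ∪ V₂ = Set.univ)
    (hsep : ∀ u ∈ V₁, ∀ v ∈ V₂, (∀ t, A u v t = ⊤) ∧ (∀ t, A v u t = ⊤))
    (A' : (S ∪ {s, d} : Set V) → (S ∪ {s, d} : Set V) → ℝ≥0∞ → ℝ≥0∞)
    (hA' : ∀ u v t, A' u v t =
      min (confArr A (V₁ ∪ S) u.1 v.1 t) (confArr A (V₂ ∪ S) u.1 v.1 t)) :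
    FIFO A' ∧
      ∀ t, endToEnd A' ⟨s, by simp⟩ ⟨d, by simp⟩ t = endToEnd A s d t := by
  obtain rfl : A' = separatorNet A V₁ S V₂ _ := funext fun u => funext fun v => funext (hA' u v)
  exact ⟨fifo_separatorNet hA,
    endToEnd_separatorNet hA hcover hsep Set.subset_union_left _ _⟩
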